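/- arXiv:2309.04929 — 3 statements merged into one kernel-verified Lean document; each statement's English description precedes it below -/
import Mathlib

section
/- The unique stationary point of U_s(p) = Σ_{n=1}^N (p - C)(α_n/p - D_n/γ) on (0, ∞) is p* = sqrt( C·γ·(Σ_{n=1}^N α_n) / (Σ_{n=1}^N D_n) ), and U_s attains its maximum over (0, ∞) at p*. -/
/-!
Aggregating the followers, `U_s(p) = (p - C) (A / p - B / γ)` with `A = ∑ α_n`, `B = ∑ D_n`,
whose derivative `C A / p² - B / γ` is strictly decreasing on `(0, ∞)` and vanishes exactly at
`p* = √(C γ A / B)`. Global optimality follows from the identity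
`U_s(p*) - U_s(p) = B (p - p*)² / (γ p)`, valid because `p*² B = C γ A`.
-/

open Finset

noncomputable def leaderUtility (A B γ C p : ℝ) : ℝ := (p - C) * (A / p - B / γ)

theorem sum_mul_sub_div_sub_div {ι : Type*} (s : Finset ι) (α D : ι → ℝ) (γ C p : ℝ) :
    ∑ n ∈ s, (p - C) * (α n / p - D n / γ) =
      leaderUtility (∑ n ∈ s, α n) (∑ n ∈ s, D n) γ C p := by
  rw [leaderUtility, ← mul_sum, sum_sub_distrib, ← sum_div, ← sum_div]

section LeaderUtility

variable {A B γ C p q : ℝ}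

theorem hasDerivAt_leaderUtility (hp : p ≠ 0) :
    HasDerivAt (leaderUtility A B γ C) (C * A / p ^ 2 - B / γ) p := by
  have hdemand : HasDerivAt (fun p => A / p - B / γ) (A * -(p ^ 2)⁻¹) p := by
    simpa only [div_eq_mul_inv] using ((hasDerivAt_inv hp).const_mul A).sub_const (B / γ)
  refine (((hasDerivAt_id' p).sub_const C).mul hdemand).congr_deriv ?_
  field_simp
  ring

theorem deriv_leaderUtility (hp : p ≠ 0) :
    deriv (leaderUtility A B γ C) p = C * A / p ^ 2 - B / γ :=
  (hasDerivAt_leaderUtility hp).deriv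

theorem marginal_leaderUtility_eq_zero_iff (hB : B ≠ 0) (hγ : γ ≠ 0) (hp : 0 < p) :
    C * A / p ^ 2 - B / γ = 0 ↔ p = √(C * γ * A / B) := by
  have hsq : C * A / p ^ 2 - B / γ = 0 ↔ p ^ 2 = C * γ * A / B := by
    rw [sub_eq_zero, div_eq_div_iff (by positivity) hγ, eq_div_iff hB]
    constructor <;> intro h <;> linarith
  rw [hsq]
  constructor
  · intro h
    rw [← h, Real.sqrt_sq hp.le]
  · intro h
    have hpos : 0 < C * γ * A / B := Real.sqrt_pos.mp (h ▸ hp)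
    rw [h, Real.sq_sqrt hpos.le]

theorem leaderUtility_sub_leaderUtility (hp : p ≠ 0) (hq : q ≠ 0) (hγ : γ ≠ 0)
    (hopt : q ^ 2 * B = C * γ * A) :
    leaderUtility A B γ C q - leaderUtility A B γ C p = B * (p - q) ^ 2 / (γ * p) := by
  rw [leaderUtility, leaderUtility]
  field_simp
  linear_combination (p - q) * hopt

theorem leaderUtility_le_leaderUtility_sqrt (hB : 0 < B) (hγ : 0 < γ) (hCA : 0 < C * A) (hp : 0 < p) :
    leaderUtility A B γ C p ≤ leaderUtility A B γ C √(C * γ * A / B) := by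
  have hpos : 0 < C * γ * A / B := by
    rw [mul_right_comm]
    positivity
  have hopt : √(C * γ * A / B) ^ 2 * B = C * γ * A := by
    rw [Real.sq_sqrt hpos.le, div_mul_cancel₀ _ hB.ne']
  have hgap := leaderUtility_sub_leaderUtility hp.ne' (Real.sqrt_pos.mpr hpos).ne' hγ.ne' hopt
  have : 0 ≤ B * (p - √(C * γ * A / B)) ^ 2 / (γ * p) := by positivity
  linarith

end LeaderUtility

theorem stmt_7 (N : ℕ) (hN : 1 ≤ N) (α D : Fin N → ℝ) (γ C : ℝ)
    (hα : ∀ n, 0 < α n) (hD : ∀ n, 0 < D n) (hγ : 0 < γ) (hC : 0 < C) :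
    deriv (fun p => ∑ n, (p - C) * (α n / p - D n / γ))
        (Real.sqrt (C * γ * (∑ n, α n) / (∑ n, D n))) = 0 ∧
    (∀ p : ℝ, 0 < p →
      deriv (fun p => ∑ n, (p - C) * (α n / p - D n / γ)) p = 0 →
      p = Real.sqrt (C * γ * (∑ n, α n) / (∑ n, D n))) ∧
    (∀ p : ℝ, 0 < p →
      (∑ n, (p - C) * (α n / p - D n / γ))
        ≤ ∑ n, (Real.sqrt (C * γ * (∑ n, α n) / (∑ n, D n)) - C)
            * (α n / Real.sqrt (C * γ * (∑ n, α n) / (∑ n, D n)) - D n / γ)) := by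
  have hne : (univ : Finset (Fin N)).Nonempty := univ_nonempty_iff.mpr ⟨⟨0, hN⟩⟩
  have hA : 0 < ∑ n, α n := sum_pos (fun n _ => hα n) hne
  have hB : 0 < ∑ n, D n := sum_pos (fun n _ => hD n) hne
  simp only [sum_mul_sub_div_sub_div]
  have hq : 0 < √(C * γ * (∑ n, α n) / ∑ n, D n) := by positivity
  refine ⟨?_, fun p hp hcrit => ?_, fun p hp => leaderUtility_le_leaderUtility_sqrt hB hγ (by positivity) hp⟩
  · rw [deriv_leaderUtility hq.ne', marginal_leaderUtility_eq_zero_iff hB.ne' hγ.ne' hq]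
  · rwa [deriv_leaderUtility hp.ne', marginal_leaderUtility_eq_zero_iff hB.ne' hγ.ne' hp] at hcrit
end

section
/- Assume p* = sqrt(Cγ·(Σα_n)/(ΣD_n)) satisfies p* > C (equivalently γ·(Σα_n) > C·(ΣD_n)). Then the MSP's equilibrium utility is U_s(p*) = ( sqrt(γ·Σα_n) - sqrt(C·ΣD_n) )² / γ. -/
theorem stmt_10 (N : ℕ) (hN : 1 ≤ N) (α D : Fin N → ℝ) (γ C : ℝ)
    (hα : ∀ n, 0 < α n) (hD : ∀ n, 0 < D n) (hγ : 0 < γ) (hC : 0 < C)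
    (h : C < Real.sqrt (C * γ * (∑ n, α n) / (∑ n, D n))) :
    (∑ n, (Real.sqrt (C * γ * (∑ n, α n) / (∑ n, D n)) - C)
        * (α n / Real.sqrt (C * γ * (∑ n, α n) / (∑ n, D n)) - D n / γ))
      = (Real.sqrt (γ * (∑ n, α n)) - Real.sqrt (C * (∑ n, D n))) ^ 2 / γ := by
  have hne : (Finset.univ : Finset (Fin N)).Nonempty :=
    Finset.univ_nonempty_iff.mpr (Fin.pos_iff_nonempty.mp hN)
  have hA : 0 < ∑ n, α n := Finset.sum_pos (fun n _ => hα n) hne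
  have hB : 0 < ∑ n, D n := Finset.sum_pos (fun n _ => hD n) hne
  set A := ∑ n, α n with hAdef
  set B := ∑ n, D n with hBdef
  set p := Real.sqrt (C * γ * A / B) with hpdef
  have hp : 0 < p := lt_trans hC h
  -- express p in terms of individual sqrts
  have hpe : p = Real.sqrt C * Real.sqrt γ * Real.sqrt A / Real.sqrt B := by
    rw [hpdef, Real.sqrt_div' _ (by positivity), Real.sqrt_mul (by positivity),
      Real.sqrt_mul hC.le]
  set sa := Real.sqrt A with hsadef
  set sb := Real.sqrt B with hsbdef
  set sc := Real.sqrt C with hscdef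
  set sg := Real.sqrt γ with hsgdef
  have hsa : sa ^ 2 = A := Real.sq_sqrt hA.le
  have hsb : sb ^ 2 = B := Real.sq_sqrt hB.le
  have hsc : sc ^ 2 = C := Real.sq_sqrt hC.le
  have hsg : sg ^ 2 = γ := Real.sq_sqrt hγ.le
  have hsa0 : (0:ℝ) < sa := Real.sqrt_pos.mpr hA
  have hsb0 : (0:ℝ) < sb := Real.sqrt_pos.mpr hB
  have hsc0 : (0:ℝ) < sc := Real.sqrt_pos.mpr hC
  have hsg0 : (0:ℝ) < sg := Real.sqrt_pos.mpr hγ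
  have hgA : Real.sqrt (γ * A) = Real.sqrt γ * Real.sqrt A := Real.sqrt_mul hγ.le _
  have hCB : Real.sqrt (C * B) = Real.sqrt C * Real.sqrt B := Real.sqrt_mul hC.le _
  have hsum : (∑ n, (p - C) * (α n / p - D n / γ)) = (p - C) * (A / p - B / γ) := by
    rw [← Finset.mul_sum, Finset.sum_sub_distrib, ← Finset.sum_div, ← Finset.sum_div]
  rw [hsum, hgA, hCB, hpe, ← hsa, ← hsb, ← hsc, ← hsg]
  field_simp
  rw [Real.sqrt_sq hsg0.le, Real.sqrt_sq hsa0.le, Real.sqrt_sq hsc0.le, Real.sqrt_sq hsb0.le]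
end

section
/- The pair (b*, p*) with p* = sqrt(Cγ·Σα_n/ΣD_n) and b_n* = α_n/p* − D_n/γ constitutes a Stackelberg equilibrium: for every n and every b > 0, U_n(b_n*, p*) ≥ U_n(b, p*), and U_s(p*) ≥ U_s(p) for all p > 0 where U_s(p) = Σ_n (p − C)·b_n*(p); assume γ α_n > p* D_n for all n so each b_n* > 0. -/
/-!
Each follower's utility `b ↦ α log (1 + γ b / D) - p b` is concave, so it lies below its tangent
at the stationary point `α / p - D / γ`; this is `log x ≤ x - 1`. Summed over the followers, the
leader's profit is `(p - C) (A / p - B / γ)` with `A = Σ α`, `B = Σ D`, and its gap to the value at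
`p* = √(C γ A / B)` is the square `B (p - p*)² / (p γ)`.
-/

open Real

noncomputable section

def followerUtility (α D γ p b : ℝ) : ℝ := α * log (1 + γ * b / D) - p * b

def bestResponse (α D γ p : ℝ) : ℝ := α / p - D / γ

def leaderProfit (A B γ C p : ℝ) : ℝ := (p - C) * (A / p - B / γ)

def equilibriumPrice (A B γ C : ℝ) : ℝ := √(C * γ * A / B)

end

theorem one_add_mul_bestResponse_div {α D γ p : ℝ} (hD : D ≠ 0) (hγ : γ ≠ 0) (hp : p ≠ 0) :
    1 + γ * bestResponse α D γ p / D = γ * α / (p * D) := by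
  unfold bestResponse
  field_simp
  ring

theorem followerUtility_le_bestResponse {α D γ p b : ℝ} (hα : 0 < α) (hD : 0 < D) (hγ : 0 < γ)
    (hp : 0 < p) (hb : 0 < 1 + γ * b / D) :
    followerUtility α D γ p b ≤ followerUtility α D γ p (bestResponse α D γ p) := by
  set b' := bestResponse α D γ p
  have hy' : 1 + γ * b' / D = γ * α / (p * D) :=
    one_add_mul_bestResponse_div hD.ne' hγ.ne' hp.ne'
  have hb' : 0 < 1 + γ * b' / D := hy' ▸ by positivity
  have hlog := log_le_sub_one_of_pos (div_pos hb hb')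
  have hratio : (1 + γ * b / D) / (1 + γ * b' / D) - 1 = p * (b - b') / α := by
    rw [hy']
    simp only [b', bestResponse]
    field_simp
    ring
  rw [log_div hb.ne' hb'.ne', hratio] at hlog
  have key : α * (log (1 + γ * b / D) - log (1 + γ * b' / D)) ≤ p * (b - b') := by
    calc α * (log (1 + γ * b / D) - log (1 + γ * b' / D))
        ≤ α * (p * (b - b') / α) := mul_le_mul_of_nonneg_left hlog hα.le
      _ = p * (b - b') := by field_simp
  unfold followerUtility
  linarith

theorem sum_leaderProfit {ι : Type*} (s : Finset ι) (α D : ι → ℝ) (γ C p : ℝ) :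
    ∑ n ∈ s, (p - C) * (α n / p - D n / γ)
      = leaderProfit (∑ n ∈ s, α n) (∑ n ∈ s, D n) γ C p := by
  rw [leaderProfit, Finset.sum_div, Finset.sum_div, ← Finset.sum_sub_distrib, Finset.mul_sum]

theorem leaderProfit_equilibriumPrice_sub {A B γ C p : ℝ} (hA : 0 < A) (hB : 0 < B) (hγ : 0 < γ)
    (hC : 0 < C) (hp : 0 < p) :
    leaderProfit A B γ C (equilibriumPrice A B γ C) - leaderProfit A B γ C p
      = B * (p - equilibriumPrice A B γ C) ^ 2 / (p * γ) := by
  set q := equilibriumPrice A B γ C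
  have hq : 0 < q := sqrt_pos.mpr (by positivity)
  have hqsq : C * γ * A = q ^ 2 * B := by
    simp only [q, equilibriumPrice]
    rw [sq_sqrt (by positivity)]
    field_simp
  unfold leaderProfit
  field_simp
  linear_combination (q - p) * hqsq

theorem leaderProfit_le_equilibriumPrice {A B γ C p : ℝ} (hA : 0 < A) (hB : 0 < B) (hγ : 0 < γ)
    (hC : 0 < C) (hp : 0 < p) :
    leaderProfit A B γ C p ≤ leaderProfit A B γ C (equilibriumPrice A B γ C) := by
  have hgap := leaderProfit_equilibriumPrice_sub hA hB hγ hC hp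
  have : 0 ≤ B * (p - equilibriumPrice A B γ C) ^ 2 / (p * γ) := by positivity
  linarith

theorem stmt_13_general (N : ℕ) (hN : 1 ≤ N) (α D : Fin N → ℝ) (γ C : ℝ)
    (hα : ∀ n, 0 < α n) (hD : ∀ n, 0 < D n) (hγ : 0 < γ) (hC : 0 < C) :
    (∀ n, ∀ b : ℝ, 0 < b →
      α n * Real.log (1 + γ * b / D n)
          - Real.sqrt (C * γ * (∑ m, α m) / (∑ m, D m)) * b
        ≤ α n * Real.log (1 + γ * (α n / Real.sqrt (C * γ * (∑ m, α m) / (∑ m, D m)) - D n / γ) / D n)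
          - Real.sqrt (C * γ * (∑ m, α m) / (∑ m, D m))
            * (α n / Real.sqrt (C * γ * (∑ m, α m) / (∑ m, D m)) - D n / γ)) ∧
    (∀ p : ℝ, 0 < p →
      (∑ n, (p - C) * (α n / p - D n / γ))
        ≤ ∑ n, (Real.sqrt (C * γ * (∑ m, α m) / (∑ m, D m)) - C)
            * (α n / Real.sqrt (C * γ * (∑ m, α m) / (∑ m, D m)) - D n / γ)) := by
  have hne : (Finset.univ : Finset (Fin N)).Nonempty := ⟨⟨0, hN⟩, Finset.mem_univ _⟩
  have hA : 0 < ∑ m, α m := Finset.sum_pos (fun n _ => hα n) hne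
  have hB : 0 < ∑ m, D m := Finset.sum_pos (fun n _ => hD n) hne
  have hp : 0 < equilibriumPrice (∑ m, α m) (∑ m, D m) γ C := sqrt_pos.mpr (by positivity)
  refine ⟨fun n b hb => ?_, fun p hp' => ?_⟩
  · have hb' : 0 < 1 + γ * b / D n := by have := hD n; positivity
    exact followerUtility_le_bestResponse (hα n) (hD n) hγ hp hb'
  · rw [sum_leaderProfit, sum_leaderProfit]
    exact leaderProfit_le_equilibriumPrice hA hB hγ hC hp'

theorem stmt_13 (N : ℕ) (hN : 1 ≤ N) (α D : Fin N → ℝ) (γ C : ℝ)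
    (hα : ∀ n, 0 < α n) (hD : ∀ n, 0 < D n) (hγ : 0 < γ) (hC : 0 < C)
    (hint : ∀ n, Real.sqrt (C * γ * (∑ m, α m) / (∑ m, D m)) * D n < γ * α n) :
    (∀ n, ∀ b : ℝ, 0 < b →
      α n * Real.log (1 + γ * b / D n)
          - Real.sqrt (C * γ * (∑ m, α m) / (∑ m, D m)) * b
        ≤ α n * Real.log (1 + γ * (α n / Real.sqrt (C * γ * (∑ m, α m) / (∑ m, D m)) - D n / γ) / D n)
          - Real.sqrt (C * γ * (∑ m, α m) / (∑ m, D m))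
            * (α n / Real.sqrt (C * γ * (∑ m, α m) / (∑ m, D m)) - D n / γ)) ∧
    (∀ p : ℝ, 0 < p →
      (∑ n, (p - C) * (α n / p - D n / γ))
        ≤ ∑ n, (Real.sqrt (C * γ * (∑ m, α m) / (∑ m, D m)) - C)
            * (α n / Real.sqrt (C * γ * (∑ m, α m) / (∑ m, D m)) - D n / γ)) :=
  stmt_13_general N hN α D γ C hα hD hγ hC
end
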